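/- arXiv:2208.05254 — 3 statements merged into one kernel-verified Lean document; each statement's English description precedes it below -/
import Mathlib

section
/- For every rational number r with 0 < r ≤ 1, there exists a natural number n such that the n-th iterate γⁿ(r) equals 1. (This is the statement that the graph on the rationals in (0,1], obtained by joining each rational other than 1 to its image under γ, is a rooted tree with root 1.) -/
/-- The slow Gauss map on the rationals, with the additional convention
`γ(1) = 1` used when iterating: for `r ≠ 1`, `γ(r) = 1/r - 1` if `r ≥ 1/2`,
and `γ(r) = r/(1-r)` if `r < 1/2`. -/
def slowGaussQ (r : ℚ) : ℚ :=
  if r = 1 then 1 else if 1/2 ≤ r then 1/r - 1 else r / (1 - r)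

lemma slowGaussQ_key (r : ℚ) (h0 : 0 < r) (h1 : r < 1) :
    0 < slowGaussQ r ∧ slowGaussQ r ≤ 1 ∧ (slowGaussQ r).den < r.den := by
  have hne : r ≠ 1 := ne_of_lt h1
  have hnum : 0 < r.num := Rat.num_pos.mpr h0
  have hdenpos : (0:ℚ) < (r.den : ℚ) := by positivity
  have hr0 : r ≠ 0 := ne_of_gt h0
  have hnumQ : (r.num : ℚ) ≠ 0 := Int.cast_ne_zero.mpr (ne_of_gt hnum)
  have hdenQ : ((r.den : ℚ)) ≠ 0 := ne_of_gt hdenpos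
  have hrdef : r = (r.num : ℚ) / (r.den : ℚ) := (Rat.num_div_den r).symm
  have hlt : r.num < (r.den : ℤ) := by
    have : (r.num : ℚ) < (r.den : ℚ) := by
      rw [hrdef, div_lt_one hdenpos] at h1; exact h1
    exact_mod_cast this
  by_cases hh : 1/2 ≤ r
  · have hγ : slowGaussQ r = 1/r - 1 := by rw [slowGaussQ, if_neg hne, if_pos hh]
    refine ⟨?_, ?_, ?_⟩
    · rw [hγ]
      have : 1 < 1/r := by rw [lt_div_iff₀ h0]; linarith
      linarith
    · rw [hγ]
      have : 1/r ≤ 2 := by rw [div_le_iff₀ h0]; linarith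
      linarith
    · have heq : slowGaussQ r = Rat.divInt ((r.den : ℤ) - r.num) r.num := by
        have hmul : r * (r.den : ℚ) = (r.num : ℚ) := by
          have h := hrdef
          rw [eq_div_iff hdenQ] at h
          exact h
        rw [Rat.divInt_eq_div, hγ]
        push_cast
        rw [eq_div_iff hnumQ, sub_mul, one_mul, ← hmul, one_div, inv_mul_cancel_left₀ hr0]
      rw [heq]
      have hdvd := Rat.den_dvd ((r.den : ℤ) - r.num) r.num
      have hle : ((Rat.divInt ((r.den : ℤ) - r.num) r.num).den : ℤ) ≤ r.num :=
        Int.le_of_dvd hnum hdvd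
      omega
  · push_neg at hh
    have hγ : slowGaussQ r = r / (1 - r) := by rw [slowGaussQ, if_neg hne, if_neg (not_le.mpr hh)]
    refine ⟨?_, ?_, ?_⟩
    · rw [hγ]
      have : 0 < 1 - r := by linarith
      positivity
    · rw [hγ, div_le_one (by linarith)]; linarith
    · have heq : slowGaussQ r = Rat.divInt r.num ((r.den : ℤ) - r.num) := by
        have hmul : r * (r.den : ℚ) = (r.num : ℚ) := by
          have h := hrdef
          rw [eq_div_iff hdenQ] at h
          exact h
        have h1r : (1 : ℚ) - r ≠ 0 := by intro hc; apply hne; linarith [sub_eq_zero.mp hc]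
        have h2 : ((r.den : ℚ)) - (r.num : ℚ) ≠ 0 := by
          have : (r.num : ℚ) < (r.den : ℚ) := by exact_mod_cast hlt
          linarith [this]
        rw [Rat.divInt_eq_div, hγ]
        push_cast
        rw [div_eq_div_iff h1r h2, mul_sub, mul_sub, mul_one, hmul]
        ring
      rw [heq]
      have hdvd := Rat.den_dvd r.num ((r.den : ℤ) - r.num)
      have hpos : (0:ℤ) < (r.den : ℤ) - r.num := by omega
      have hle : ((Rat.divInt r.num ((r.den : ℤ) - r.num)).den : ℤ) ≤ (r.den : ℤ) - r.num :=
        Int.le_of_dvd hpos hdvd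
      omega

lemma slowGaussQ_aux : ∀ d : ℕ, ∀ r : ℚ, r.den ≤ d → 0 < r → r ≤ 1 →
    ∃ n : ℕ, slowGaussQ^[n] r = 1 := by
  intro d
  induction d with
  | zero => intro r hd _ _; have := r.pos; omega
  | succ d ih =>
    intro r hd h0 h1
    rcases eq_or_lt_of_le h1 with h | h
    · exact ⟨0, h⟩
    · obtain ⟨p0, p1, pd⟩ := slowGaussQ_key r h0 h
      obtain ⟨n, hn⟩ := ih (slowGaussQ r) (by omega) p0 p1
      exact ⟨n + 1, by rw [Function.iterate_succ_apply]; exact hn⟩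

theorem stmt3 (r : ℚ) (h0 : 0 < r) (h1 : r ≤ 1) :
    ∃ n : ℕ, slowGaussQ^[n] r = 1 := by
  exact slowGaussQ_aux r.den r le_rfl h0 h1
end

section
/- Let r be a real number with 0 < r < 1 such that 1/r is not an integer, and let m = ⌊1/r⌋. Then the m-th iterate of the slow Gauss map satisfies γᵐ(r) = 1/r − m, i.e., the suitably iterated slow Gauss map agrees with the classical Gauss map r ↦ fractional part of 1/r, with comparison exponent m = ⌊1/r⌋. -/
/-- The slow Gauss map on the reals: `γ(r) = 1/r - 1` if `r ≥ 1/2`,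
and `γ(r) = r/(1-r)` if `r < 1/2`. -/
noncomputable def slowGauss (r : ℝ) : ℝ := if 1/2 ≤ r then 1/r - 1 else r / (1 - r)

lemma key (n : ℕ) : ∀ r : ℝ, 0 < r → r < 1 → (∀ k : ℤ, 1/r ≠ (k : ℝ)) →
    ⌊1/r⌋ = (n : ℤ) + 1 → slowGauss^[n+1] r = 1/r - (n + 1 : ℝ) := by
  induction n with
  | zero =>
    intro r h0 h1 hni hf
    have h2 : 1/r < 2 := by
      have := Int.lt_floor_add_one (1/r)
      rw [hf] at this; push_cast at this; linarith
    have hr : (1:ℝ)/2 ≤ r := by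
      have := (div_lt_iff₀ h0).mp h2
      linarith
    rw [Function.iterate_one]
    unfold slowGauss
    rw [if_pos hr]
    norm_num
  | succ n ih =>
    intro r h0 h1 hni hf
    have hge : ((n:ℝ) + 2) ≤ 1/r := by
      have := Int.floor_le (1/r)
      rw [hf] at this; push_cast at this; linarith
    have hgt : ((n:ℝ) + 2) < 1/r := by
      rcases lt_or_eq_of_le hge with h | h
      · exact h
      · exact absurd h.symm (by exact_mod_cast hni ((n:ℤ)+2))
    have hrlt : r < 1/2 := by
      have h2 : (2:ℝ) < 1/r := by
        have : (0:ℝ) ≤ n := Nat.cast_nonneg n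
        linarith
      have := (lt_div_iff₀ h0).mp h2
      linarith
    have h1r : (0:ℝ) < 1 - r := by linarith
    have hne : r ≠ 0 := ne_of_gt h0
    have hne1 : (1:ℝ) - r ≠ 0 := ne_of_gt h1r
    set r' := r / (1 - r) with hr'
    have hinv : 1/r' = 1/r - 1 := by
      rw [hr']; field_simp
    have h0' : 0 < r' := div_pos h0 h1r
    have h1' : r' < 1 := by
      rw [hr', div_lt_one h1r]; linarith
    have hni' : ∀ k : ℤ, 1/r' ≠ (k : ℝ) := by
      intro k hk
      apply hni (k + 1)
      rw [hinv] at hk; push_cast; linarith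
    have hf' : ⌊1/r'⌋ = (n : ℤ) + 1 := by
      have h : (1:ℝ)/r' = (1/r) + ((-1 : ℤ) : ℝ) := by rw [hinv]; push_cast; ring
      rw [h, Int.floor_add_intCast, hf]; push_cast; ring
    have step : slowGauss r = r' := by
      unfold slowGauss
      rw [if_neg (not_le.mpr hrlt)]
    calc slowGauss^[n+2] r = slowGauss^[n+1] (slowGauss r) := by
          rw [Function.iterate_succ_apply]
      _ = 1/r' - (n + 1 : ℝ) := by rw [step]; exact ih r' h0' h1' hni' hf'
      _ = 1/r - ((n:ℝ) + 1 + 1) := by rw [hinv]; ring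
      _ = 1/r - ((n+1 : ℕ) + 1 : ℝ) := by push_cast; ring

theorem stmt6 (r : ℝ) (h0 : 0 < r) (h1 : r < 1) (hnotint : ∀ k : ℤ, 1/r ≠ (k : ℝ)) :
    slowGauss^[(⌊1/r⌋).toNat] r = 1/r - (⌊1/r⌋ : ℝ) := by
  have hgt1 : 1 < 1/r := one_lt_one_div h0 h1
  have hfl : 1 ≤ ⌊1/r⌋ := by exact_mod_cast Int.le_floor.mpr (by exact_mod_cast hgt1.le)
  obtain ⟨n, hn⟩ : ∃ n : ℕ, ⌊1/r⌋ = (n : ℤ) + 1 := by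
    refine ⟨(⌊1/r⌋ - 1).toNat, ?_⟩
    rw [Int.toNat_of_nonneg (by linarith)]; ring
  have hnat : (⌊1/r⌋).toNat = n + 1 := by omega
  rw [hnat, key n r h0 h1 hnotint hn, hn]
  push_cast
  ring
end

section
/- Let r be a rational number with 0 < r < 1, and let K(r) be the least natural number n with γⁿ(r) = 1 (which exists). Then K(r) equals the sum of the partial quotients a₁ + a₂ + ... + a_m in the (canonical) continued fraction expansion r = [0; a₁, a₂, ..., a_m], minus 1. In other words, the continued fraction expansion of r is obtained by recording the comparison exponents seen as one iteratively applies the slow Gauss map to r. -/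
/-- The value of the continued fraction `[0; a₁, ..., a_m]` where
`[a₁, ..., a_m]` is the given list of partial quotients. -/
def cfVal : List ℕ → ℚ
  | [] => 0
  | a :: l => 1 / ((a : ℚ) + cfVal l)

/-!
Writing `r = 1 / y` with `y = a₁ + [0; a₂, …, a_m]`, one step of `γ` replaces `y` by `y - 1`:
it lowers `a₁` by one while `a₁ ≥ 2`, and when `a₁ = 1` it leaves `y - 1 = [0; a₂, …, a_m]`.
So after `a₁ + ⋯ + a_m - 2` steps the orbit of `r` is at `[0; 2] = 1/2`, which is not `1`
and is mapped to `1`; since `1` is a fixed point, this pins down the first hitting time.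
-/

theorem sInf_setOf_iterate_eq_of_isFixedPt {α : Type*} {f : α → α} {p q x : α} {n : ℕ}
    (hp : Function.IsFixedPt f p) (hq : f q = p) (hqp : q ≠ p) (hx : f^[n] x = q) :
    sInf {k | f^[k] x = p} = n + 1 := by
  have hmem : n + 1 ∈ {k | f^[k] x = p} := by
    rw [Set.mem_ofPred_eq, Function.iterate_succ_apply', hx, hq]
  refine le_antisymm (Nat.sInf_le hmem) (le_csInf ⟨_, hmem⟩ fun k hk => ?_)
  by_contra! hlt
  apply hqp
  rw [← hx, ← Nat.sub_add_cancel (Nat.lt_succ_iff.mp hlt), Function.iterate_add_apply, hk,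
    (hp.iterate _).eq]

theorem slowGaussQ_one_div_of_two_le {y : ℚ} (hy : 2 ≤ y) : slowGaussQ (1 / y) = 1 / (y - 1) := by
  have hy1 : 1 / y ≠ 1 := (div_lt_one (by linarith)).mpr (by linarith) |>.ne
  rw [slowGaussQ, if_neg hy1]
  split_ifs with hhalf
  · have hy2 : y = 2 := le_antisymm ((one_div_le_one_div two_pos (by linarith)).mp hhalf) hy
    norm_num [hy2]
  · have : y - 1 ≠ 0 := by linarith
    field_simp

theorem slowGaussQ_one_div_of_le_two {y : ℚ} (hy1 : 1 < y) (hy2 : y ≤ 2) :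
    slowGaussQ (1 / y) = y - 1 := by
  have hne : 1 / y ≠ 1 := (div_lt_one (by linarith)).mpr hy1 |>.ne
  have hhalf : 1 / 2 ≤ 1 / y := one_div_le_one_div_of_le (by linarith) hy2
  rw [slowGaussQ, if_neg hne, if_pos hhalf, one_div_one_div]

theorem slowGaussQ_isFixedPt_one : Function.IsFixedPt slowGaussQ 1 := by
  simp [Function.IsFixedPt, slowGaussQ]

theorem slowGaussQ_half : slowGaussQ (1 / 2) = 1 := by
  norm_num [slowGaussQ]

theorem cfVal_nonneg (l : List ℕ) : 0 ≤ cfVal l := by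
  induction l with
  | nil => exact le_rfl
  | cons a l ih => unfold cfVal; positivity

theorem cfVal_pos {l : List ℕ} (hl : ∀ a ∈ l, 0 < a) (hne : l ≠ []) : 0 < cfVal l := by
  obtain ⟨a, l, rfl⟩ := List.exists_cons_of_ne_nil hne
  have ha : (0 : ℚ) < a := by exact_mod_cast hl a List.mem_cons_self
  have := cfVal_nonneg l
  unfold cfVal
  positivity

theorem cfVal_le_one {l : List ℕ} (hl : ∀ a ∈ l, 0 < a) : cfVal l ≤ 1 := by
  cases l with
  | nil => exact zero_le_one
  | cons a l =>
    have ha : (1 : ℚ) ≤ a := by exact_mod_cast hl a List.mem_cons_self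
    have := cfVal_nonneg l
    exact (div_le_one (by linarith)).mpr (by linarith)

theorem slowGaussQ_cfVal_succ_cons {a : ℕ} (ha : 1 ≤ a) (l : List ℕ) :
    slowGaussQ (cfVal ((a + 1) :: l)) = cfVal (a :: l) := by
  have ha' : (1 : ℚ) ≤ a := by exact_mod_cast ha
  have := cfVal_nonneg l
  simp only [cfVal]
  rw [slowGaussQ_one_div_of_two_le (by push_cast; linarith)]
  push_cast
  ring_nf

theorem slowGaussQ_cfVal_one_cons {l : List ℕ} (hl : ∀ a ∈ l, 0 < a) (hne : l ≠ []) :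
    slowGaussQ (cfVal (1 :: l)) = cfVal l := by
  have h0 := cfVal_pos hl hne
  have h1 := cfVal_le_one hl
  simp only [cfVal, Nat.cast_one]
  rw [slowGaussQ_one_div_of_le_two (by linarith) (by linarith)]
  ring

theorem iterate_slowGaussQ_cfVal_add_cons (a : ℕ) {b : ℕ} (hb : 1 ≤ b) (l : List ℕ) :
    slowGaussQ^[a] (cfVal ((a + b) :: l)) = cfVal (b :: l) := by
  induction a with
  | zero => rw [zero_add, Function.iterate_zero_apply]
  | succ a ih =>
    rw [Function.iterate_succ_apply, Nat.add_right_comm,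
      slowGaussQ_cfVal_succ_cons (by omega), ih]

theorem iterate_slowGaussQ_cfVal_cons {a : ℕ} (ha : 0 < a) {l : List ℕ} (hl : ∀ c ∈ l, 0 < c)
    (hne : l ≠ []) : slowGaussQ^[a] (cfVal (a :: l)) = cfVal l := by
  obtain ⟨a, rfl⟩ := Nat.exists_eq_add_of_le' ha
  rw [Function.iterate_succ_apply', iterate_slowGaussQ_cfVal_add_cons a le_rfl,
    slowGaussQ_cfVal_one_cons hl hne]

theorem iterate_slowGaussQ_cfVal_append_singleton {l : List ℕ} (hl : ∀ a ∈ l, 0 < a) {b : ℕ}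
    (hb : 2 ≤ b) : slowGaussQ^[l.sum + b - 2] (cfVal (l ++ [b])) = 1 / 2 := by
  induction l with
  | nil =>
    obtain ⟨c, rfl⟩ := Nat.exists_eq_add_of_le' hb
    rw [List.sum_nil, List.nil_append, zero_add, Nat.add_sub_cancel,
      iterate_slowGaussQ_cfVal_add_cons c one_le_two]
    norm_num [cfVal]
  | cons a l ih =>
    have ha := hl a List.mem_cons_self
    have hl' : ∀ c ∈ l, 0 < c := fun c hc => hl c (List.mem_cons_of_mem a hc)
    have hlb : ∀ c ∈ l ++ [b], 0 < c := fun c hc => by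
      rcases List.mem_append.mp hc with hc | hc
      · exact hl' c hc
      · rw [List.mem_singleton.mp hc]; omega
    rw [List.sum_cons, show a + l.sum + b - 2 = (l.sum + b - 2) + a by omega,
      Function.iterate_add_apply, List.cons_append,
      iterate_slowGaussQ_cfVal_cons ha hlb (by simp), ih hl']

theorem stmt7_general (r : ℚ)
    (L : List ℕ) (hL : L ≠ []) (hpos : ∀ a ∈ L, 0 < a)
    (hlast : 2 ≤ L.getLast hL) (hval : cfVal L = r) :
    sInf {n : ℕ | slowGaussQ^[n] r = 1} = L.sum - 1 := by
  subst hval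
  have hsplit := List.dropLast_append_getLast hL
  have hhalf := iterate_slowGaussQ_cfVal_append_singleton
    (fun a ha => hpos a (List.mem_of_mem_dropLast ha)) hlast
  have hsum : L.sum = L.dropLast.sum + L.getLast hL := by
    rw [← List.sum_singleton (x := L.getLast hL), ← List.sum_append, hsplit]
  rw [hsplit] at hhalf
  rw [sInf_setOf_iterate_eq_of_isFixedPt slowGaussQ_isFixedPt_one slowGaussQ_half (by norm_num)
    hhalf]
  omega

theorem stmt7 (r : ℚ) (h0 : 0 < r) (h1 : r < 1)
    (L : List ℕ) (hL : L ≠ []) (hpos : ∀ a ∈ L, 0 < a)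
    (hlast : 2 ≤ L.getLast hL) (hval : cfVal L = r) :
    sInf {n : ℕ | slowGaussQ^[n] r = 1} = L.sum - 1 :=
  stmt7_general r L hL hpos hlast hval
end
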